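/- arXiv:math/0601642 — 3 statements merged into one kernel-verified Lean document; each statement's English description precedes it below -/
import Mathlib

section
/- If a, b lie in the open unit disk, d_G(a,b) = δ with δ < |a| and δ ≤ 1/2, then |arg(a/b)| ≤ arcsin(δ(1-|a|²)/(|a|(1-δ²))) ≤ 3δ/|a|, where the argument is taken in [-π/2, π/2]. -/
open Complex Real

private lemma key_real (A B d x y : ℝ) (hdA : d < A) (hA1 : A < 1) (hB0 : 0 < B)
    (hd0 : 0 ≤ d)
    (hcon : A + B - 2*x = d*(1 + A*B - 2*x)) (hxy : x^2 + y^2 = A*B) :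
    0 < x ∧ y^2 * (1-d)^2 ≤ d * (1-A)^2 * B := by
  have hd1 : d < 1 := lt_trans hdA hA1
  have h2x : 2*x*(1-d) = (A-d) + (1-d*A)*B := by nlinarith [hcon]
  have hAd : 0 < A - d := by linarith
  have hdA1 : 0 < 1 - d*A := by nlinarith
  constructor
  · nlinarith
  · have hu : (2*x*(1-d))^2 = ((A-d) + (1-d*A)*B)^2 := by rw [h2x]
    have h4 : x^2*(1-d)^2 ≥ (A-d)*(1-d*A)*B := by
      nlinarith [hu, sq_nonneg ((A-d) - (1-d*A)*B)]
    have h5 : (x^2 + y^2)*(1-d)^2 = A*B*(1-d)^2 := by rw [hxy]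
    nlinarith [h4, h5]

private lemma arcsin_le_mul {x c : ℝ} (hx : 0 ≤ x) (hc : Real.pi / 2 ≤ c) :
    Real.arcsin x ≤ c * x := by
  have hπ : 0 < π := Real.pi_pos
  have hc0 : 0 < c := lt_of_lt_of_le (by positivity) hc
  rcases le_or_gt 1 x with h | h
  · calc Real.arcsin x ≤ π / 2 := Real.arcsin_le_pi_div_two x
    _ ≤ c := hc
    _ ≤ c * x := le_mul_of_one_le_right hc0.le h
  · have h0 : 0 ≤ Real.arcsin x := Real.arcsin_nonneg.2 hx
    have h1 : Real.arcsin x ≤ π / 2 := Real.arcsin_le_pi_div_two x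
    have hs : Real.sin (Real.arcsin x) = x := Real.sin_arcsin (by linarith) h.le
    have hjordan := Real.mul_le_sin h0 h1
    rw [hs, div_mul_eq_mul_div, div_le_iff₀ hπ] at hjordan
    -- 2 * arcsin x ≤ x * π
    have hπc : π ≤ 2 * c := by linarith
    nlinarith [mul_le_mul_of_nonneg_left hπc hx]

set_option maxHeartbeats 1000000 in
/-- If `d_G(a,b) = δ < |a|` and `δ ≤ 1/2`, then the argument of `a/b` is at most
`arcsin(δ(1-|a|²)/(|a|(1-δ²))) ≤ 3δ/|a|`. -/
theorem stmt1 (a b : ℂ) (ha : ‖a‖ < 1) (hb : ‖b‖ < 1)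
    (ha0 : a ≠ 0) (hb0 : b ≠ 0) (δ : ℝ)
    (hd : ‖(a - b) / (1 - b * (starRingEnd ℂ) a)‖ = δ)
    (hδa : δ < ‖a‖) (hδhalf : δ ≤ 1 / 2) :
    |Complex.arg (a / b)| ≤
        Real.arcsin (δ * (1 - ‖a‖ ^ 2) / (‖a‖ * (1 - δ ^ 2))) ∧
      Real.arcsin (δ * (1 - ‖a‖ ^ 2) / (‖a‖ * (1 - δ ^ 2)))
        ≤ 3 * δ / ‖a‖ := by
  have ha0' : 0 < ‖a‖ := norm_pos_iff.mpr ha0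
  have hb0' : 0 < ‖b‖ := norm_pos_iff.mpr hb0
  have hδ0 : 0 ≤ δ := hd ▸ (norm_nonneg _)
  have hden : (1 : ℂ) - b * (starRingEnd ℂ) a ≠ 0 := by
    intro h
    have h1 : (1 : ℂ) = b * (starRingEnd ℂ) a := by linear_combination h
    have : ‖b * (starRingEnd ℂ) a‖ = 1 := by rw [← h1]; simp
    rw [norm_mul, Complex.norm_conj] at this
    nlinarith
  have habs1 : 0 < ‖1 - b * (starRingEnd ℂ) a‖ := norm_pos_iff.mpr hden
  have h1 : ‖a - b‖ = δ * ‖1 - b * (starRingEnd ℂ) a‖ := by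
    rw [norm_div] at hd
    field_simp at hd
    linarith [hd]
  have hsq : Complex.normSq (a - b) = δ^2 * Complex.normSq (1 - b * (starRingEnd ℂ) a) := by
    rw [← Complex.sq_norm, ← Complex.sq_norm, h1]; ring
  have e1 : Complex.normSq (a - b)
      = ‖a‖ ^ 2 + ‖b‖ ^ 2 - 2 * (a * (starRingEnd ℂ) b).re := by
    rw [Complex.normSq_sub, Complex.normSq_eq_norm_sq, Complex.normSq_eq_norm_sq]
  have e2 : Complex.normSq (1 - b * (starRingEnd ℂ) a)
      = 1 + ‖a‖ ^ 2 * ‖b‖ ^ 2 - 2 * (a * (starRingEnd ℂ) b).re := by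
    rw [show ‖a‖ ^ 2 = Complex.normSq a from Complex.sq_norm a,
        show ‖b‖ ^ 2 = Complex.normSq b from Complex.sq_norm b]
    simp [Complex.normSq_apply, Complex.mul_re, Complex.mul_im, Complex.sub_re, Complex.sub_im]
    ring
  have hcon : ‖a‖ ^ 2 + ‖b‖ ^ 2 - 2 * (a * (starRingEnd ℂ) b).re
      = δ^2 * (1 + ‖a‖ ^ 2 * ‖b‖ ^ 2
        - 2 * (a * (starRingEnd ℂ) b).re) := by
    rw [← e1, ← e2]; exact hsq
  have hxy : (a * (starRingEnd ℂ) b).re ^ 2 + (a * (starRingEnd ℂ) b).im ^ 2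
      = ‖a‖ ^ 2 * ‖b‖ ^ 2 := by
    have h := Complex.sq_norm (a * (starRingEnd ℂ) b)
    rw [norm_mul, Complex.norm_conj] at h
    rw [Complex.normSq_apply] at h
    nlinarith [h]
  have hA1 : ‖a‖ ^ 2 < 1 := by nlinarith
  have hB0 : 0 < ‖b‖ ^ 2 := by positivity
  have hdA : δ^2 < ‖a‖ ^ 2 := by nlinarith
  have hd1' : 0 < 1 - δ^2 := by nlinarith
  obtain ⟨hx0, hy2⟩ := key_real (‖a‖ ^ 2) (‖b‖ ^ 2) (δ^2)
    ((a * (starRingEnd ℂ) b).re) ((a * (starRingEnd ℂ) b).im)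
    hdA hA1 hB0 (by positivity) hcon hxy
  -- arg (a/b) = arg (a * conj b)
  have harg : Complex.arg (a / b) = Complex.arg (a * (starRingEnd ℂ) b) := by
    have heq : a / b = ((Complex.normSq b)⁻¹ : ℝ) * (a * (starRingEnd ℂ) b) := by
      rw [Complex.ofReal_inv]
      rw [div_eq_iff hb0]
      have hnb : (Complex.normSq b : ℂ) ≠ 0 := by
        simpa using (Complex.normSq_pos.2 hb0).ne'
      field_simp
      exact Complex.normSq_eq_conj_mul_self
    rw [heq, Complex.arg_real_mul]
    exact inv_pos.2 (Complex.normSq_pos.2 hb0)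
  set z := a * (starRingEnd ℂ) b with hz
  have habsz : ‖z‖ = ‖a‖ * ‖b‖ := by
    rw [hz, norm_mul, Complex.norm_conj]
  have habsz0 : 0 < ‖z‖ := by rw [habsz]; positivity
  have hargle : |Complex.arg z| ≤ π / 2 :=
    Complex.abs_arg_le_pi_div_two_iff.2 (le_of_lt hx0)
  set K := δ * (1 - ‖a‖ ^ 2) / (‖a‖ * (1 - δ^2)) with hK
  have hA1' : (0:ℝ) ≤ 1 - ‖a‖ ^ 2 := by linarith
  have hK0 : 0 ≤ K := div_nonneg (mul_nonneg hδ0 hA1') (by positivity)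
  have hsinbound : |Real.sin (Complex.arg z)| ≤ K := by
    rw [Complex.sin_arg, abs_div, abs_of_pos habsz0, div_le_iff₀ habsz0]
    have hKz : (K * ‖z‖)^2
        = δ^2 * (1 - ‖a‖ ^ 2)^2 * ‖b‖ ^ 2 / (1-δ^2)^2 := by
      rw [habsz, hK]
      field_simp
    have hsq2 : |z.im|^2 ≤ (K * ‖z‖)^2 := by
      rw [_root_.sq_abs, hKz, ← sub_nonneg]
      have heq2 : δ^2 * (1 - ‖a‖ ^ 2)^2 * ‖b‖ ^ 2 / (1-δ^2)^2 - z.im^2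
          = (δ^2 * (1 - ‖a‖ ^ 2)^2 * ‖b‖ ^ 2
              - z.im^2 * (1-δ^2)^2) / (1-δ^2)^2 := by
        field_simp
      rw [heq2]
      apply div_nonneg _ (by positivity)
      linarith [hy2]
    have habsKz : (0:ℝ) ≤ K * ‖z‖ := by positivity
    exact (pow_le_pow_iff_left₀ (abs_nonneg z.im) habsKz two_ne_zero).mp hsq2
  have hfirst : |Complex.arg (a / b)| ≤ Real.arcsin K := by
    rw [harg]
    have hh1 : |Complex.arg z| = Real.arcsin (Real.sin |Complex.arg z|) :=
      (Real.arcsin_sin (by linarith [abs_nonneg (Complex.arg z)]) hargle).symm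
    have hh2 : Real.sin |Complex.arg z| = |Real.sin (Complex.arg z)| := by
      rcases abs_cases (Complex.arg z) with ⟨h, h'⟩ | ⟨h, h'⟩
      · rw [h, _root_.abs_of_nonneg]
        exact Real.sin_nonneg_of_nonneg_of_le_pi h' (by linarith [Real.pi_pos])
      · rw [h, Real.sin_neg, _root_.abs_of_nonpos]
        exact Real.sin_nonpos_of_nonpos_of_neg_pi_le h'.le (by nlinarith [Real.pi_pos])
    rw [hh1, hh2]
    exact Real.monotone_arcsin hsinbound
  refine ⟨hfirst, ?_⟩
  have h2K : Real.arcsin K ≤ 2 * K :=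
    arcsin_le_mul hK0 (by nlinarith [Real.pi_lt_d2])
  have hKle : K ≤ δ / ‖a‖ := by
    rw [hK, div_le_div_iff₀ (by positivity) ha0']
    have hle : 1 - ‖a‖ ^ 2 ≤ 1 - δ ^ 2 := by nlinarith
    nlinarith [mul_le_mul_of_nonneg_left hle (mul_nonneg hδ0 ha0'.le)]
  have ht : 0 ≤ δ / ‖a‖ := by positivity
  calc Real.arcsin K ≤ 2 * K := h2K
    _ ≤ 2 * (δ / ‖a‖) := by linarith
    _ ≤ 3 * δ / ‖a‖ := by rw [mul_div_assoc]; linarith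
end

section
/- For ζ₂ ∈ 𝔻 and ζ ∈ 𝔻, |φ_{ζ₂}(ζ) - 1| ≤ ((1+|ζ|)/(1-|ζ|)) · |1 - ζ₂|, where φ_a(ζ) = (a-ζ)/(1-ζ·conj(a)). -/
open Complex

/-- For `ζ, ζ₂` in the unit disk, `|φ_{ζ₂}(ζ) - 1| ≤ ((1+|ζ|)/(1-|ζ|))·|1-ζ₂|`,
where `φ_a(ζ) = (a-ζ)/(1-ζ·conj a)`. -/
theorem stmt2 (ζ ζ₂ : ℂ) (hζ : ‖ζ‖ < 1) (hζ₂ : ‖ζ₂‖ < 1) :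
    ‖(ζ₂ - ζ) / (1 - ζ * (starRingEnd ℂ) ζ₂) - 1‖
      ≤ (1 + ‖ζ‖) / (1 - ‖ζ‖) * ‖1 - ζ₂‖ := by
  set D : ℂ := 1 - ζ * (starRingEnd ℂ) ζ₂ with hDdef
  have hpos : 0 < 1 - ‖ζ‖ := by linarith
  have habsD : 1 - ‖ζ‖ ≤ ‖D‖ := by
    have h1 : ‖ζ * (starRingEnd ℂ) ζ₂‖ = ‖ζ‖ * ‖ζ₂‖ := by
      simp [map_mul]
    have h2 : ‖(1 : ℂ)‖ - ‖ζ * (starRingEnd ℂ) ζ₂‖ ≤ ‖D‖ :=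
      norm_sub_norm_le 1 (ζ * (starRingEnd ℂ) ζ₂)
    have h3 : ‖ζ‖ * ‖ζ₂‖ ≤ ‖ζ‖ := by
      nlinarith [norm_nonneg ζ, norm_nonneg ζ₂]
    simp only [norm_one] at h2
    linarith [h2, h3, h1 ▸ h2]
  have hD0 : D ≠ 0 := by
    intro h
    rw [h] at habsD
    simp at habsD
    linarith
  rw [div_sub_one hD0, norm_div]
  have hnum : ‖ζ₂ - ζ - D‖ ≤ (1 + ‖ζ‖) * ‖1 - ζ₂‖ := by
    have : ζ₂ - ζ - D = -(1 - ζ₂) - ζ * (starRingEnd ℂ) (1 - ζ₂) := by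
      simp [hDdef, map_sub, map_one]; ring
    rw [this]
    calc ‖-(1 - ζ₂) - ζ * (starRingEnd ℂ) (1 - ζ₂)‖
        ≤ ‖-(1 - ζ₂)‖ + ‖ζ * (starRingEnd ℂ) (1 - ζ₂)‖ :=
          norm_sub_le _ _
      _ = (1 + ‖ζ‖) * ‖1 - ζ₂‖ := by
          have e1 : ‖-(1 - ζ₂)‖ = ‖1 - ζ₂‖ := norm_neg _
          have e2 : ‖(starRingEnd ℂ) (1 - ζ₂)‖ = ‖1 - ζ₂‖ :=
            Complex.norm_conj _
          rw [e1, norm_mul, e2]; ring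
  rw [div_mul_eq_mul_div]
  exact div_le_div₀ (by positivity) hnum hpos habsD
end

section
/- Given distinct points ζ₀, ζ₁ ∈ 𝔻 and values w₁, w₂ ∈ 𝔻 with d_G(w₁, w₂) < d_G(ζ₁, ζ₀), there exists a holomorphic function h : 𝔻 → 𝔻 with h(ζ₁) = w₁ and h(ζ₀) = w₂. -/
open Complex Metric

lemma moeb_ne {a z : ℂ} (ha : ‖a‖ < 1) (hz : ‖z‖ < 1) :
    1 - (starRingEnd ℂ) a * z ≠ 0 := by
  intro h
  have h1 : (starRingEnd ℂ) a * z = 1 := by linear_combination -h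
  have h2 : ‖(starRingEnd ℂ) a * z‖ < 1 := by
    rw [norm_mul, Complex.norm_conj]
    nlinarith [norm_nonneg a, norm_nonneg z]
  rw [h1] at h2; simp at h2

lemma moeb_lt {a z : ℂ} (ha : ‖a‖ < 1) (hz : ‖z‖ < 1) :
    ‖(z - a) / (1 - (starRingEnd ℂ) a * z)‖ < 1 := by
  rw [norm_div, div_lt_one (by
    exact (norm_pos_iff.mpr (moeb_ne ha hz)))]
  have key : Complex.normSq (1 - (starRingEnd ℂ) a * z) - Complex.normSq (z - a)
      = (1 - Complex.normSq a) * (1 - Complex.normSq z) := by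
    simp [Complex.normSq_apply, Complex.sub_re, Complex.sub_im, Complex.mul_re, Complex.mul_im]
    ring
  have ha2 : Complex.normSq a < 1 := by
    have := Complex.sq_norm a; nlinarith [norm_nonneg a]
  have hz2 : Complex.normSq z < 1 := by
    have := Complex.sq_norm z; nlinarith [norm_nonneg z]
  have : ‖z - a‖ ^ 2 < ‖1 - (starRingEnd ℂ) a * z‖ ^ 2 := by
    rw [Complex.sq_norm, Complex.sq_norm]; nlinarith
  exact lt_of_pow_lt_pow_left₀ 2 (norm_nonneg _) this

/-- Two-point Schwarz–Pick interpolation: if `d_G(w₁,w₂) < d_G(ζ₁,ζ₀)` there is a holomorphic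
`h : 𝔻 → 𝔻` with `h ζ₁ = w₁` and `h ζ₀ = w₂`. -/
theorem stmt9 (ζ₀ ζ₁ : ℂ) (hζ₀ : ‖ζ₀‖ < 1) (hζ₁ : ‖ζ₁‖ < 1)
    (hne : ζ₀ ≠ ζ₁) (w₁ w₂ : ℂ) (hw₁ : ‖w₁‖ < 1) (hw₂ : ‖w₂‖ < 1)
    (hd : ‖(w₁ - w₂) / (1 - w₂ * (starRingEnd ℂ) w₁)‖
        < ‖(ζ₁ - ζ₀) / (1 - ζ₀ * (starRingEnd ℂ) ζ₁)‖) :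
    ∃ h : ℂ → ℂ, DifferentiableOn ℂ h (ball (0 : ℂ) 1) ∧
      Set.MapsTo h (ball (0 : ℂ) 1) (ball (0 : ℂ) 1) ∧ h ζ₁ = w₁ ∧ h ζ₀ = w₂ := by
  set φ : ℂ → ℂ := fun z => (z - ζ₁) / (1 - (starRingEnd ℂ) ζ₁ * z) with hφdef
  set α : ℂ := φ ζ₀ with hαdef
  set β : ℂ := (w₂ - w₁) / (1 - (starRingEnd ℂ) w₁ * w₂) with hβdef
  set c : ℂ := β / α with hcdef
  have hζ₁ζ₀ : (1 : ℂ) - (starRingEnd ℂ) ζ₁ * ζ₀ ≠ 0 := moeb_ne hζ₁ hζ₀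
  have hw₁w₂ : (1 : ℂ) - (starRingEnd ℂ) w₁ * w₂ ≠ 0 := moeb_ne hw₁ hw₂
  have hα0 : α ≠ 0 := by
    simp only [hαdef, hφdef]
    exact div_ne_zero (sub_ne_zero.mpr hne) hζ₁ζ₀
  -- |α| equals RHS of hd, |β| equals LHS of hd
  have hαabs : ‖α‖ = ‖(ζ₁ - ζ₀) / (1 - ζ₀ * (starRingEnd ℂ) ζ₁)‖ := by
    simp only [hαdef, hφdef, norm_div]
    rw [show ζ₁ - ζ₀ = -(ζ₀ - ζ₁) by ring, norm_neg,
      show (1 : ℂ) - ζ₀ * (starRingEnd ℂ) ζ₁ = 1 - (starRingEnd ℂ) ζ₁ * ζ₀ by ring]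
  have hβabs : ‖β‖ = ‖(w₁ - w₂) / (1 - w₂ * (starRingEnd ℂ) w₁)‖ := by
    simp only [hβdef, norm_div]
    rw [show w₂ - w₁ = -(w₁ - w₂) by ring, norm_neg,
      show (1 : ℂ) - w₂ * (starRingEnd ℂ) w₁ = 1 - (starRingEnd ℂ) w₁ * w₂ by ring]
  have hc : ‖c‖ < 1 := by
    rw [hcdef, norm_div, div_lt_one (norm_pos_iff.mpr hα0), hαabs]
    rw [hβabs]; exact hd
  have hφlt : ∀ z ∈ ball (0 : ℂ) 1, ‖φ z‖ < 1 := by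
    intro z hz
    rw [mem_ball_zero_iff] at hz
    exact moeb_lt hζ₁ hz
  have hult : ∀ z ∈ ball (0 : ℂ) 1, ‖c * φ z‖ < 1 := by
    intro z hz
    rw [norm_mul]
    nlinarith [norm_nonneg c, norm_nonneg (φ z), hφlt z hz, hc]
  refine ⟨fun z => (c * φ z + w₁) / (1 + (starRingEnd ℂ) w₁ * (c * φ z)), ?_, ?_, ?_, ?_⟩
  · -- differentiability
    have hφd : DifferentiableOn ℂ φ (ball (0 : ℂ) 1) := by
      apply DifferentiableOn.div
      · exact (differentiable_id.sub_const ζ₁).differentiableOn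
      · exact ((differentiable_id.const_mul _).const_sub 1).differentiableOn
      · intro z hz
        rw [mem_ball_zero_iff] at hz
        exact moeb_ne hζ₁ hz
    apply DifferentiableOn.div
    · exact ((hφd.const_mul c).add_const w₁)
    · exact (((hφd.const_mul c).const_mul _).const_add 1)
    · intro z hz
      intro h0
      have : (starRingEnd ℂ) w₁ * (c * φ z) = -1 := by linear_combination h0
      have h2 : ‖(starRingEnd ℂ) w₁ * (c * φ z)‖ < 1 := by
        rw [norm_mul, Complex.norm_conj]
        nlinarith [norm_nonneg w₁, norm_nonneg (c * φ z), hult z hz]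
      rw [this] at h2; simp at h2
  · -- maps to
    intro z hz
    rw [mem_ball_zero_iff]
    have := moeb_lt (a := -w₁) (z := c * φ z) (by simpa using hw₁) (hult z hz)
    simpa [sub_neg_eq_add, map_neg] using this
  · -- value at ζ₁
    have : φ ζ₁ = 0 := by simp [hφdef]
    simp [this]
  · -- value at ζ₀
    have hcα : c * α = β := div_mul_cancel₀ β hα0
    have hw₁1 : (1 : ℂ) - (starRingEnd ℂ) w₁ * w₁ ≠ 0 := moeb_ne hw₁ hw₁
    show (c * φ ζ₀ + w₁) / (1 + (starRingEnd ℂ) w₁ * (c * φ ζ₀)) = w₂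
    have hw₁1' : (1 : ℂ) - w₁ * (starRingEnd ℂ) w₁ ≠ 0 := by rw [mul_comm]; exact hw₁1
    rw [← hαdef, hcα, hβdef]
    rw [div_add' _ _ _ hw₁w₂, mul_div_assoc', one_add_div hw₁w₂, div_div_div_cancel_right₀ hw₁w₂]
    rw [div_eq_iff (by
      rw [show (1 : ℂ) - (starRingEnd ℂ) w₁ * w₂ + (starRingEnd ℂ) w₁ * (w₂ - w₁)
          = 1 - (starRingEnd ℂ) w₁ * w₁ by ring]
      exact hw₁1)]
    ring
end
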